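/- arXiv:2109.07052 — 2 statements merged into one kernel-verified Lean document; each statement's English description precedes it below -/
import Mathlib

section
/- Let $X = \{x_1,\dots,x_m\} \subseteq H_n$. Then the supremum of $\sum_{i,j=1}^m \alpha_i \alpha_j d_1(x_i,x_j)$ over all real $\alpha_1,\dots,\alpha_m$ with $\sum_i \alpha_i = 1$ is at most $n/2$. -/
/-!
The quadratic form splits over the coordinates. On `{0,1}` one has `|a - b| = a + b - 2ab`, so
with `S = ∑ αᵢ aᵢ` a single coordinate contributes `2S(1 - S) ≤ 1/2`.
-/

open Finset

theorem abs_sub_eq_of_zero_or_one {a b : ℝ} (ha : a = 0 ∨ a = 1) (hb : b = 0 ∨ b = 1) :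
    |a - b| = a + b - 2 * (a * b) := by
  rcases ha with rfl | rfl <;> rcases hb with rfl | rfl <;> norm_num

theorem sum_sum_mul_abs_sub_of_zero_or_one {ι : Type*} [Fintype ι] (α a : ι → ℝ)
    (ha : ∀ i, a i = 0 ∨ a i = 1) :
    ∑ i, ∑ j, α i * α j * |a i - a j|
      = 2 * (∑ i, α i * a i) * (∑ i, α i - ∑ i, α i * a i) := by
  have expand : ∀ i j, α i * α j * |a i - a j|
      = α i * a i * α j + α i * (α j * a j) - 2 * (α i * a i) * (α j * a j) := by
    intro i j
    rw [abs_sub_eq_of_zero_or_one (ha i) (ha j)]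
    ring
  simp only [expand, sum_add_distrib, sum_sub_distrib, ← mul_sum, ← sum_mul]
  ring

theorem sum_sum_mul_abs_sub_le_of_zero_or_one {ι : Type*} [Fintype ι] {α : ι → ℝ}
    (hα : ∑ i, α i = 1) (a : ι → ℝ) (ha : ∀ i, a i = 0 ∨ a i = 1) :
    ∑ i, ∑ j, α i * α j * |a i - a j| ≤ 1 / 2 := by
  rw [sum_sum_mul_abs_sub_of_zero_or_one α a ha, hα]
  nlinarith [sq_nonneg (∑ i, α i * a i - 1 / 2)]

theorem stmt_6 {m n : ℕ} (x : Fin m → EuclideanSpace ℝ (Fin n))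
    (hx : ∀ i j, x i j = 0 ∨ x i j = 1) :
    sSup {v : ℝ | ∃ α : Fin m → ℝ, ∑ i, α i = 1 ∧
        v = ∑ i, ∑ j, α i * α j * (∑ t, |x i t - x j t|)} ≤ n / 2 := by
  refine Real.sSup_le ?_ (by positivity)
  rintro v ⟨α, hα, rfl⟩
  calc ∑ i, ∑ j, α i * α j * (∑ t, |x i t - x j t|)
      = ∑ t, ∑ i, ∑ j, α i * α j * |x i t - x j t| := by
        simp only [mul_sum]
        exact (sum_congr rfl fun _ _ => sum_comm).trans sum_comm
    _ ≤ ∑ _t : Fin n, (1 / 2 : ℝ) :=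
        sum_le_sum fun t _ => sum_sum_mul_abs_sub_le_of_zero_or_one hα _ fun i => hx i t
    _ = n / 2 := by rw [sum_const, card_univ, Fintype.card_fin, nsmul_eq_mul]; ring
end

section
/- Let $X \subseteq H_n$ be an affinely independent subset with at least two points, with distance matrix $D$. Then $\frac{2}{n} \le \langle D^{-1}\mathbf{1}, \mathbf{1}\rangle \le 2$, i.e., the sum of all entries of $D^{-1}$ lies between $2/n$ and $2$. -/
/-!
On `{0,1}^n` the Hamming distance is the squared Euclidean distance, so `D` is the squared
distance matrix of the vertices of a simplex. If `w` are the barycentric coordinates of its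
circumcenter (circumradius `r`), the Leibniz formula gives `D w = 2 r² 𝟙`, hence
`⟨D⁻¹ 𝟙, 𝟙⟩ = 1 / (2 r²)`. Two distinct vertices of the cube are at distance at least `1`, so
`2 r ≥ 1`; the centre of the cube is at distance `√(n / 4)` from every vertex and projects
orthogonally onto the circumcenter, so `r² ≤ n / 4`.
-/

open Finset Matrix

theorem Matrix.sum_inv_mul_eq_sum_of_mulVec_eq_const {ι R : Type*} [Fintype ι] [DecidableEq ι]
    [CommRing R] {A : Matrix ι ι R} (hA : IsUnit A.det) {w : ι → R} {a : R}
    (h : A *ᵥ w = fun _ => a) : (∑ i, ∑ j, A⁻¹ i j) * a = ∑ i, w i := by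
  have hw : A⁻¹ *ᵥ (fun _ => a) = w := by
    rw [← h, mulVec_mulVec, nonsing_inv_mul A hA, one_mulVec]
  simp_rw [← hw, sum_mul, mulVec, dotProduct]

section Binary

variable {ι : Type*} [Fintype ι] {x y : EuclideanSpace ℝ ι}

theorem EuclideanSpace.sum_abs_sub_eq_dist_sq_of_binary (hx : ∀ t, x t = 0 ∨ x t = 1)
    (hy : ∀ t, y t = 0 ∨ y t = 1) : ∑ t, |x t - y t| = dist x y ^ 2 := by
  rw [EuclideanSpace.dist_eq, Real.sq_sqrt (by positivity)]
  refine sum_congr rfl fun t _ => ?_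
  rcases hx t with h | h <;> rcases hy t with h' | h' <;> simp [h, h', Real.dist_eq]

theorem EuclideanSpace.one_le_dist_of_binary (hx : ∀ t, x t = 0 ∨ x t = 1)
    (hy : ∀ t, y t = 0 ∨ y t = 1) (hxy : x ≠ y) : 1 ≤ dist x y := by
  obtain ⟨t, ht⟩ : ∃ t, x t ≠ y t := by
    by_contra! h
    exact hxy (PiLp.ext h)
  have hone : |x t - y t| = 1 := by
    rcases hx t with h | h <;> rcases hy t with h' | h' <;> simp_all
  have h1 : 1 ≤ dist x y ^ 2 := by
    rw [← sum_abs_sub_eq_dist_sq_of_binary hx hy, ← hone]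
    exact single_le_sum (f := fun s => |x s - y s|) (fun _ _ => abs_nonneg _) (mem_univ t)
  nlinarith [dist_nonneg (x := x) (y := y)]

theorem EuclideanSpace.dist_sq_half_of_binary (hx : ∀ t, x t = 0 ∨ x t = 1) :
    dist x (WithLp.toLp 2 fun _ => 1 / 2) ^ 2 = Fintype.card ι / 4 := by
  rw [EuclideanSpace.dist_eq, Real.sq_sqrt (by positivity)]
  have hterm : ∀ t, dist (x t) (1 / 2) ^ 2 = 1 / 4 := fun t => by
    rcases hx t with h | h <;> norm_num [h, Real.dist_eq]
  simp only [hterm, sum_const, card_univ, nsmul_eq_mul]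
  ring

end Binary

variable {V P : Type*} [NormedAddCommGroup V] [InnerProductSpace ℝ V] [MetricSpace P]
  [NormedAddTorsor V P]

theorem sum_mul_dist_sq_eq_dist_affineCombination_sq_add {ι : Type*} (s : Finset ι)
    (w : ι → ℝ) (p : ι → P) (hw : ∑ i ∈ s, w i = 1) (q : P) :
    ∑ i ∈ s, w i * dist q (p i) ^ 2 =
      dist q (s.affineCombination ℝ p w) ^ 2 +
        ∑ i ∈ s, w i * dist (p i) (s.affineCombination ℝ p w) ^ 2 := by
  set c := s.affineCombination ℝ p w
  have hbalance : ∑ i ∈ s, w i • (p i -ᵥ c) = 0 := by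
    have h := s.affineCombination_eq_weightedVSubOfPoint_vadd_of_sum_eq_one w p hw c
    rw [s.weightedVSubOfPoint_apply] at h
    exact (eq_vadd_iff_vsub_eq _ _ _).1 h |>.symm.trans (vsub_self c)
  have hcross : ∑ i ∈ s, w i * inner ℝ (q -ᵥ c) (p i -ᵥ c) = 0 := by
    simp_rw [← real_inner_smul_right, ← inner_sum, hbalance, inner_zero_right]
  calc ∑ i ∈ s, w i * dist q (p i) ^ 2
      = ∑ i ∈ s, (w i * dist q c ^ 2 - 2 * (w i * inner ℝ (q -ᵥ c) (p i -ᵥ c))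
          + w i * dist (p i) c ^ 2) := by
        refine sum_congr rfl fun i _ => ?_
        rw [dist_eq_norm_vsub V, dist_eq_norm_vsub V, dist_eq_norm_vsub V,
          ← vsub_sub_vsub_cancel_right q (p i) c, norm_sub_sq_real]
        ring
    _ = _ := by
        rw [sum_add_distrib, sum_sub_distrib, ← sum_mul, ← mul_sum, hcross, hw]
        ring

def sqDistMatrix {ι : Type*} (p : ι → P) : Matrix ι ι ℝ :=
  Matrix.of fun i j => dist (p i) (p j) ^ 2

namespace Affine.Simplex

variable {k : ℕ}

theorem sqDistMatrix_mulVec_eq_of_circumcenter_eq (s : Simplex ℝ P k) {w : Fin (k + 1) → ℝ}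
    (hw : ∑ i, w i = 1) (hc : s.circumcenter = univ.affineCombination ℝ s.points w) :
    sqDistMatrix s.points *ᵥ w = fun _ => 2 * s.circumradius ^ 2 := by
  funext i
  have h := sum_mul_dist_sq_eq_dist_affineCombination_sq_add univ w s.points hw (s.points i)
  simp only [← hc, dist_circumcenter_eq_circumradius, ← sum_mul, hw] at h
  simp only [mulVec, dotProduct, sqDistMatrix, of_apply]
  simp_rw [mul_comm _ (w _)]
  linarith

theorem det_sqDistMatrix_ne_zero (s : Simplex ℝ P (k + 1)) :
    (sqDistMatrix s.points).det ≠ 0 := by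
  intro hdet
  obtain ⟨v, hv0, hv⟩ := exists_mulVec_eq_zero_iff.2 hdet
  obtain ⟨w, hw, hc⟩ := eq_affineCombination_of_mem_affineSpan_of_fintype
    s.circumcenter_mem_affineSpan
  have hDw := s.sqDistMatrix_mulVec_eq_of_circumcenter_eq hw hc
  set σ := ∑ i, v i
  set r := s.circumradius
  -- `u` has total weight `0` and `D u` is constant, so `uᵀ D u = 0`, i.e. the vector
  -- `∑ uᵢ • pᵢ` has norm `0`; affine independence then forces `u = 0`.
  set u := v - σ • w
  have hu : ∑ i, u i = 0 := by simp [u, σ, sum_sub_distrib, ← mul_sum, hw]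
  have hDu : sqDistMatrix s.points *ᵥ u = fun _ => -(σ * (2 * r ^ 2)) := by
    ext i
    simp [u, mulVec_sub, mulVec_smul, hv, hDw]
  have hquad : ∑ i, ∑ j, u i * u j * (dist (s.points i) (s.points j) *
      dist (s.points i) (s.points j)) = 0 := by
    calc ∑ i, ∑ j, u i * u j * (dist (s.points i) (s.points j) * dist (s.points i) (s.points j))
        = ∑ i, u i * (sqDistMatrix s.points *ᵥ u) i := by
          simp only [mulVec, dotProduct, sqDistMatrix, of_apply, mul_sum, sq]
          exact sum_congr rfl fun i _ => sum_congr rfl fun j _ => by ring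
      _ = 0 := by simp [hDu, ← sum_mul, hu]
  have hws : univ.weightedVSub s.points u = (0 : V) := by
    rw [← inner_self_eq_zero (𝕜 := ℝ), EuclideanGeometry.inner_weightedVSub _ hu _ hu, hquad,
      neg_zero, zero_div]
  have hu0 := (affineIndependent_iff_of_fintype (k := ℝ) s.points).1 s.independent u hu hws
  have hvw : v = σ • w := by
    funext i
    simpa [u, sub_eq_zero] using hu0 i
  have hσ : σ = 0 := by
    rw [show u = 0 from funext hu0, mulVec_zero] at hDu
    simpa [r, s.circumradius_pos.ne'] using (congrFun hDu 0).symm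
  exact hv0 (by simpa [hσ] using hvw)

theorem dist_le_two_mul_circumradius (s : Simplex ℝ P k) (i j : Fin (k + 1)) :
    dist (s.points i) (s.points j) ≤ 2 * s.circumradius := by
  calc dist (s.points i) (s.points j)
      ≤ dist (s.points i) s.circumcenter + dist s.circumcenter (s.points j) := dist_triangle _ _ _
    _ = 2 * s.circumradius := by
      rw [dist_comm s.circumcenter, dist_circumcenter_eq_circumradius,
        dist_circumcenter_eq_circumradius, two_mul]

theorem circumradius_sq_le_of_dist_sq_eq (s : Simplex ℝ P k) {p : P} {ρ : ℝ}
    (hp : ∀ i, dist (s.points i) p ^ 2 = ρ) : s.circumradius ^ 2 ≤ ρ := by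
  have hdist : ∀ i, dist (s.points i) p = √ρ := fun i => by
    rw [← hp i, Real.sqrt_sq dist_nonneg]
  have h := s.dist_circumcenter_sq_eq_sq_sub_circumradius hdist
    (s.orthogonalProjection_eq_circumcenter_of_dist_eq hdist)
    (mem_affineSpan ℝ (Set.mem_range_self 0))
  rw [Real.mul_self_sqrt (hp 0 ▸ sq_nonneg _)] at h
  nlinarith [mul_self_nonneg (dist p s.circumcenter)]

end Affine.Simplex

theorem stmt_10 {m n : ℕ} (hm : 2 ≤ m) (x : Fin m → EuclideanSpace ℝ (Fin n))
    (hx : ∀ i j, x i j = 0 ∨ x i j = 1)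
    (hind : AffineIndependent ℝ x)
    (D : Matrix (Fin m) (Fin m) ℝ) (hD : ∀ i j, D i j = ∑ t, |x i t - x j t|) :
    2 / n ≤ ∑ i, ∑ j, D⁻¹ i j ∧ ∑ i, ∑ j, D⁻¹ i j ≤ 2 := by
  obtain ⟨k, rfl⟩ : ∃ k, m = k + 2 := ⟨m - 2, by omega⟩
  let s : Affine.Simplex ℝ (EuclideanSpace ℝ (Fin n)) (k + 1) := ⟨x, hind⟩
  obtain rfl : D = sqDistMatrix x := by
    ext i j
    rw [hD, EuclideanSpace.sum_abs_sub_eq_dist_sq_of_binary (hx i) (hx j)]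
    rfl
  obtain ⟨w, hw, hc⟩ := eq_affineCombination_of_mem_affineSpan_of_fintype
    s.circumcenter_mem_affineSpan
  have hT := Matrix.sum_inv_mul_eq_sum_of_mulVec_eq_const
    (isUnit_iff_ne_zero.2 s.det_sqDistMatrix_ne_zero)
    (s.sqDistMatrix_mulVec_eq_of_circumcenter_eq hw hc)
  rw [hw] at hT
  have hr_lower : 1 ≤ 2 * s.circumradius :=
    (EuclideanSpace.one_le_dist_of_binary (hx 0) (hx 1)
      (hind.injective.ne (by simp))).trans (s.dist_le_two_mul_circumradius 0 1)
  have hr_upper : s.circumradius ^ 2 ≤ n / 4 := by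
    simpa using s.circumradius_sq_le_of_dist_sq_eq fun i =>
      EuclideanSpace.dist_sq_half_of_binary (hx i)
  set r := s.circumradius
  have hr : 0 < r := by linarith
  rw [eq_one_div_of_mul_eq_one_left hT]
  constructor
  · rw [div_le_div_iff₀ (by nlinarith) (by positivity)]
    linarith
  · rw [div_le_iff₀ (by positivity)]
    nlinarith
end
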